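/- arXiv:math/0411353 — 4 statements merged into one kernel-verified Lean document; each statement's English description precedes it below -/
import Mathlib

section
/- The q-necklace polynomial M^q(x,n), defined by the recursion Σ_{d|n} d·q^{(n/d)-1}·M^q(x^{n/d}, d) = q^{n-1}·x^n (with M^q(x,1) = x), takes integer values whenever x and q are specialized to integers; i.e., M^q(x,n) is a numerical polynomial in the two variables q and x. -/
open Polynomial

lemma qneck_base_fermat {p : ℕ} (hp : p.Prime) {w s : ℕ} (hw : 0 < w) (hs : 0 < s)
    (hdw : (p - 1) ∣ w) (a : ℤ) : (p : ℤ) ∣ a ^ (w * s) - a ^ w := by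
  haveI : Fact p.Prime := ⟨hp⟩
  rw [← ZMod.intCast_zmod_eq_zero_iff_dvd]
  push_cast
  set x : ZMod p := (a : ZMod p) with hxdef
  by_cases hx : x = 0
  · rw [hx, zero_pow (by positivity : w * s ≠ 0), zero_pow hw.ne', sub_self]
  · obtain ⟨u, hu⟩ := hdw
    have h1 : x ^ (p - 1) = 1 := ZMod.pow_card_sub_one_eq_one hx
    have h2 : x ^ w = 1 := by rw [hu, pow_mul, h1, one_pow]
    rw [pow_mul, h2, one_pow, sub_self]

lemma qneck_pow_congr {p : ℕ} (hp : p.Prime) (r : ℕ) {t s : ℕ} (ht : 0 < t) (hs : 0 < s)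
    (hdt : (p - 1) * p ^ r ∣ t) (a : ℤ) : (p : ℤ) ^ (r + 1) ∣ a ^ (t * s) - a ^ t := by
  obtain ⟨c, hc⟩ := hdt
  have hc0 : 0 < c := by
    rcases Nat.eq_zero_or_pos c with h | h
    · subst h; simp at hc; omega
    · exact h
  have hw : 0 < (p - 1) * c := by
    have := hp.two_le; exact Nat.mul_pos (by omega) hc0
  have hb : (p : ℤ) ∣ a ^ ((p - 1) * c * s) - a ^ ((p - 1) * c) :=
    qneck_base_fermat hp hw hs (dvd_mul_right _ _) a
  have key := dvd_sub_pow_of_dvd_sub hb r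
  rw [← pow_mul, ← pow_mul] at key
  have h1 : t * s = (p - 1) * c * s * p ^ r := by rw [hc]; ring
  have h2 : t = (p - 1) * c * p ^ r := by rw [hc]; ring
  rw [h1, h2]
  exact_mod_cast key

lemma qneck_pow_dvd_of_not_dvd {p v n m d : ℕ} (hp : p.Prime) (hnm : n = p * m) (hm : 0 < m)
    (hpv : p ^ v ∣ n) (hdn : d ∣ n) (hdm : ¬ d ∣ m) : p ^ v ∣ d := by
  have hn0 : n ≠ 0 := by rw [hnm]; exact Nat.mul_ne_zero hp.pos.ne' hm.ne'
  have hd0 : d ≠ 0 := by rintro rfl; exact hn0 (zero_dvd_iff.mp hdn)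
  by_contra hcon
  apply hdm
  rw [← Nat.factorization_le_iff_dvd hd0 hm.ne', Finsupp.le_def]
  intro q
  have hdnf : d.factorization ≤ n.factorization := (Nat.factorization_le_iff_dvd hd0 hn0).mpr hdn
  have hq := Finsupp.le_def.mp hdnf q
  have hmdiv : m = n / p := by rw [hnm, Nat.mul_div_cancel_left m hp.pos]
  have hpdvd : p ∣ n := Dvd.intro m hnm.symm
  have hmf : m.factorization = n.factorization - p.factorization := by
    rw [hmdiv, Nat.factorization_div hpdvd]
  rw [hmf, Finsupp.tsub_apply, hp.factorization, Finsupp.single_apply]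
  by_cases hqp : p = q
  · subst hqp
    have h1 : ¬ v ≤ d.factorization p := by
      rw [← hp.pow_dvd_iff_le_factorization hd0]; exact hcon
    have h2 : v ≤ n.factorization p := (hp.pow_dvd_iff_le_factorization hn0).mp hpv
    simp only [if_pos rfl, eq_self_iff_true, if_true]
    omega
  · simp only [if_neg hqp]
    omega

/-- The `q`-necklace polynomial `M^q(x,n) ∈ ℚ[q][x]`, defined by the ghost
recursion `Σ_{d|n} d·q^{(n/d)-1}·M^q(x^{n/d}, d) = q^{n-1}·x^n`, takes
integer values whenever `q` and `x` are specialized to integers. -/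
theorem q_necklace_numerical (M : ℕ → Polynomial (Polynomial ℚ))
    (hM : ∀ n : ℕ, 0 < n →
      ∑ d ∈ n.divisors,
          C (C (d : ℚ) * X ^ (n / d - 1)) * ((M d).comp (X ^ (n / d)))
        = C ((X : Polynomial ℚ) ^ (n - 1)) * X ^ n) :
    ∀ (a b : ℤ) (n : ℕ), 0 < n →
      ∃ k : ℤ, ((M n).eval (C (b : ℚ))).eval (a : ℚ) = (k : ℚ) := by
  have key : ∀ N : ℕ, 0 < N → ∀ q y : ℚ,
      ∑ d ∈ N.divisors, (d : ℚ) * q ^ (N / d - 1) * ((M d).eval (C (y ^ (N / d)))).eval q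
        = q ^ (N - 1) * y ^ N := by
    intro N hN q y
    have h := congrArg (fun P => (P.eval (C y)).eval q) (hM N hN)
    simp only [eval_finset_sum, eval_mul, eval_pow, eval_C, eval_X, eval_comp, ← C_pow] at h
    rw [← h]
  suffices h : ∀ n : ℕ, 0 < n → ∀ a b : ℤ,
      ∃ k : ℤ, ((M n).eval (C (b : ℚ))).eval (a : ℚ) = (k : ℚ) from
    fun a b n hn => h n hn a b
  intro n
  induction n using Nat.strong_induction_on with
  | _ n ih =>
  intro hn a b
  -- choose integer values for smaller indices
  have exK : ∀ d : ℕ, ∃ k : ℤ, 0 < d → d < n →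
      ((M d).eval (C ((b ^ (n / d) : ℤ) : ℚ))).eval (a : ℚ) = (k : ℚ) := by
    intro d
    by_cases h : 0 < d ∧ d < n
    · obtain ⟨k, hk⟩ := ih d h.2 h.1 a (b ^ (n / d))
      exact ⟨k, fun _ _ => hk⟩
    · exact ⟨0, fun h1 h2 => absurd ⟨h1, h2⟩ h⟩
  choose K hK using exK
  have hKq : ∀ d, 0 < d → d < n →
      ((M d).eval (C ((b : ℚ) ^ (n / d)))).eval (a : ℚ) = (K d : ℚ) := by
    intro d h1 h2
    have := hK d h1 h2
    push_cast at this
    exact this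
  -- the main evaluated recursion at n
  have hmain := key n hn (a : ℚ) (b : ℚ)
  rw [← Nat.insert_self_properDivisors hn.ne',
    Finset.sum_insert Nat.self_notMem_properDivisors] at hmain
  simp only [Nat.div_self hn, Nat.sub_self, pow_zero, mul_one, pow_one] at hmain
  set S : ℤ := ∑ d ∈ n.properDivisors, (d : ℤ) * a ^ (n / d - 1) * K d with hS
  set D : ℤ := a ^ (n - 1) * b ^ n - S with hD
  have hsum : ∑ d ∈ n.properDivisors,
      (d : ℚ) * (a : ℚ) ^ (n / d - 1) * ((M d).eval (C ((b : ℚ) ^ (n / d)))).eval (a : ℚ)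
      = ((S : ℤ) : ℚ) := by
    rw [hS]
    push_cast
    exact Finset.sum_congr rfl fun d hd => by
      rw [hKq d (Nat.pos_of_mem_properDivisors hd) (Nat.mem_properDivisors.mp hd).2]
  have hDF : (n : ℚ) * ((M n).eval (C (b : ℚ))).eval (a : ℚ) = (D : ℚ) := by
    have hDc : ((D : ℤ) : ℚ) = (a : ℚ) ^ (n - 1) * (b : ℚ) ^ n - ((S : ℤ) : ℚ) := by
      rw [hD]; push_cast; ring
    rw [hDc, ← hsum]
    linarith [hmain]
  -- divisibility by each prime power dividing n
  have hppow : ∀ p v : ℕ, p.Prime → p ^ v ∣ n → (p : ℤ) ^ v ∣ D := by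
    intro p v hp hpv
    rcases Nat.eq_zero_or_pos v with rfl | hv
    · simp only [pow_zero]; exact one_dvd _
    have hpn : p ∣ n := dvd_trans (dvd_pow_self p hv.ne') hpv
    obtain ⟨m, hnm⟩ := hpn
    have hm : 0 < m := by
      rcases Nat.eq_zero_or_pos m with rfl | h
      · omega
      · exact h
    have hmn : m < n := by
      have := hp.two_le
      calc m = 1 * m := (one_mul m).symm
        _ < p * m := by exact (Nat.mul_lt_mul_right hm).mpr (by omega)
        _ = n := hnm.symm
    have hmlt : ∀ d, d ∣ m → d < n := fun d hd => lt_of_le_of_lt (Nat.le_of_dvd hm hd) hmn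
    have hnd : ∀ d, d ∣ m → n / d = p * (m / d) := by
      intro d hd; rw [hnm, Nat.mul_div_assoc p hd]
    -- the evaluated recursion at m with base b^p
    have hE := key m hm (a : ℚ) ((b : ℚ) ^ p)
    have hEZ : ∑ d ∈ m.divisors, (d : ℤ) * a ^ (m / d - 1) * K d = a ^ (m - 1) * b ^ n := by
      have h2 : ∑ d ∈ m.divisors, ((d : ℚ) * (a : ℚ) ^ (m / d - 1) * (K d : ℚ))
          = (a : ℚ) ^ (m - 1) * (b : ℚ) ^ n := by
        have e3 : ((b : ℚ) ^ p) ^ m = (b : ℚ) ^ n := by rw [← pow_mul, ← hnm]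
        rw [← e3, ← hE]
        refine Finset.sum_congr rfl fun d hd => ?_
        have hdm' : d ∣ m := (Nat.mem_divisors.mp hd).1
        have hd0 : 0 < d := Nat.pos_of_mem_divisors hd
        have e4 : ((b : ℚ) ^ p) ^ (m / d) = (b : ℚ) ^ (n / d) := by
          rw [← pow_mul, ← hnd d hdm']
        rw [e4, hKq d hd0 (hmlt d hdm')]
      exact_mod_cast h2
    have hsub : m.divisors ⊆ n.properDivisors := by
      intro d hd
      have hdm' : d ∣ m := (Nat.mem_divisors.mp hd).1
      exact Nat.mem_properDivisors.mpr
        ⟨hdm'.trans ⟨p, by rw [hnm]; ring⟩, hmlt d hdm'⟩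
    have hexp_top : (p - 1) * m + (m - 1) = n - 1 := by
      have h1 : (p - 1) * m = p * m - m := Nat.sub_one_mul p m
      have h2 : m ≤ p * m := Nat.le_mul_of_pos_left m hp.pos
      omega
    have hexp_d : ∀ d, d ∣ m → (p - 1) * (m / d) + (m / d - 1) = n / d - 1 := by
      intro d hd
      have hd0 : 0 < d := by
        rcases Nat.eq_zero_or_pos d with rfl | h
        · rw [zero_dvd_iff] at hd; omega
        · exact h
      have h0 : 0 < m / d := Nat.div_pos (Nat.le_of_dvd hm hd) hd0
      have h1 : (p - 1) * (m / d) = p * (m / d) - m / d := Nat.sub_one_mul _ _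
      have h2 : m / d ≤ p * (m / d) := Nat.le_mul_of_pos_left _ hp.pos
      have h3 := hnd d hd
      omega
    have hsplit : D = ∑ d ∈ m.divisors,
          (d : ℤ) * a ^ (m / d - 1) * K d * (a ^ ((p - 1) * m) - a ^ ((p - 1) * (m / d)))
        - ∑ d ∈ n.properDivisors \ m.divisors, (d : ℤ) * a ^ (n / d - 1) * K d := by
      have e1 : (a : ℤ) ^ (n - 1) * b ^ n
          = a ^ ((p - 1) * m) * ∑ d ∈ m.divisors, (d : ℤ) * a ^ (m / d - 1) * K d := by
        rw [hEZ, ← mul_assoc, ← pow_add, hexp_top]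
      have e2 : S = ∑ d ∈ n.properDivisors \ m.divisors, (d : ℤ) * a ^ (n / d - 1) * K d
            + ∑ d ∈ m.divisors, (d : ℤ) * a ^ (n / d - 1) * K d := by
        rw [hS]; exact (Finset.sum_sdiff hsub).symm
      have e3 : ∑ d ∈ m.divisors,
          (a ^ ((p - 1) * m) * ((d : ℤ) * a ^ (m / d - 1) * K d)
            - (d : ℤ) * a ^ (n / d - 1) * K d)
          = ∑ d ∈ m.divisors,
          (d : ℤ) * a ^ (m / d - 1) * K d * (a ^ ((p - 1) * m) - a ^ ((p - 1) * (m / d))) := by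
        refine Finset.sum_congr rfl fun d hd => ?_
        have hdm' : d ∣ m := (Nat.mem_divisors.mp hd).1
        rw [← hexp_d d hdm', pow_add]
        ring
      calc D = a ^ (n - 1) * b ^ n
            - (∑ d ∈ n.properDivisors \ m.divisors, (d : ℤ) * a ^ (n / d - 1) * K d
              + ∑ d ∈ m.divisors, (d : ℤ) * a ^ (n / d - 1) * K d) := by rw [hD, e2]
        _ = (a ^ ((p - 1) * m) * ∑ d ∈ m.divisors, (d : ℤ) * a ^ (m / d - 1) * K d
              - ∑ d ∈ m.divisors, (d : ℤ) * a ^ (n / d - 1) * K d)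
            - ∑ d ∈ n.properDivisors \ m.divisors, (d : ℤ) * a ^ (n / d - 1) * K d := by
          rw [e1]; ring
        _ = ∑ d ∈ m.divisors,
              (a ^ ((p - 1) * m) * ((d : ℤ) * a ^ (m / d - 1) * K d)
                - (d : ℤ) * a ^ (n / d - 1) * K d)
            - ∑ d ∈ n.properDivisors \ m.divisors, (d : ℤ) * a ^ (n / d - 1) * K d := by
          rw [Finset.sum_sub_distrib, Finset.mul_sum]
        _ = _ := by rw [e3]
    rw [hsplit]
    apply dvd_sub
    · apply Finset.dvd_sum
      intro d hd
      have hdm' : d ∣ m := (Nat.mem_divisors.mp hd).1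
      have hd0 : 0 < d := Nat.pos_of_mem_divisors hd
      by_cases hj : p ^ v ∣ d
      · have h' : (p : ℤ) ^ v ∣ (d : ℤ) := by exact_mod_cast hj
        exact ((h'.mul_right _).mul_right _).mul_right _
      · set j := d.factorization p with hjdef
        have hjlt : j < v := by
          by_contra h
          exact hj (dvd_trans (pow_dvd_pow p (le_of_not_gt h)) (Nat.ordProj_dvd d p))
        have hpj : p ^ j ∣ d := Nat.ordProj_dvd d p
        have hpm : p ^ (v - 1) ∣ m := by
          have h1 : p ^ (v - 1) * p ∣ m * p := by
            rw [← pow_succ]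
            have : v - 1 + 1 = v := by omega
            rw [this, mul_comm m p, ← hnm]
            exact hpv
          exact (mul_dvd_mul_iff_right hp.pos.ne').mp h1
        have hfm : v - 1 ≤ m.factorization p := (hp.pow_dvd_iff_le_factorization hm.ne').mp hpm
        have hmd0 : 0 < m / d := Nat.div_pos (Nat.le_of_dvd hm hdm') hd0
        have hfmd : v - 1 - j ≤ (m / d).factorization p := by
          rw [Nat.factorization_div hdm', Finsupp.tsub_apply]
          omega
        have hpmd : p ^ (v - 1 - j) ∣ m / d := (hp.pow_dvd_iff_le_factorization hmd0.ne').mpr hfmd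
        have ht : (p - 1) * p ^ (v - 1 - j) ∣ (p - 1) * (m / d) := mul_dvd_mul_left _ hpmd
        have htpos : 0 < (p - 1) * (m / d) := by
          have := hp.two_le
          exact Nat.mul_pos (by omega) hmd0
        have hcong := qneck_pow_congr hp (v - 1 - j) htpos hd0 ht a
        have e5 : (p - 1) * (m / d) * d = (p - 1) * m := by
          rw [mul_assoc, Nat.div_mul_cancel hdm']
        rw [e5] at hcong
        have hdvd2 : (p : ℤ) ^ v ∣ (d : ℤ) * (a ^ ((p - 1) * m) - a ^ ((p - 1) * (m / d))) := by
          have hj' : (p : ℤ) ^ j ∣ (d : ℤ) := by exact_mod_cast hpj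
          have hv' : v = j + (v - 1 - j + 1) := by omega
          rw [hv', pow_add]
          exact mul_dvd_mul hj' hcong
        have e6 : (d : ℤ) * a ^ (m / d - 1) * K d
              * (a ^ ((p - 1) * m) - a ^ ((p - 1) * (m / d)))
            = (d : ℤ) * (a ^ ((p - 1) * m) - a ^ ((p - 1) * (m / d)))
              * (a ^ (m / d - 1) * K d) := by ring
        rw [e6]
        exact hdvd2.mul_right _
    · apply Finset.dvd_sum
      intro d hd
      obtain ⟨hdp, hdnm⟩ := Finset.mem_sdiff.mp hd
      have hdn : d ∣ n := (Nat.mem_properDivisors.mp hdp).1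
      have hdm' : ¬ d ∣ m := fun h => hdnm (Nat.mem_divisors.mpr ⟨h, hm.ne'⟩)
      have hnat := qneck_pow_dvd_of_not_dvd hp hnm hm hpv hdn hdm'
      have h' : (p : ℤ) ^ v ∣ (d : ℤ) := by exact_mod_cast hnat
      exact (h'.mul_right _).mul_right _
  -- conclude n ∣ D
  have hdvd : (n : ℤ) ∣ D := by
    by_cases hD0 : D = 0
    · simp [hD0]
    have hDnat : D.natAbs ≠ 0 := fun h => hD0 (Int.natAbs_eq_zero.mp h)
    rw [← Int.dvd_natAbs, Int.natCast_dvd_natCast,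
      ← Nat.factorization_le_iff_dvd hn.ne' hDnat, Finsupp.le_def]
    intro q
    by_cases hq : q.Prime
    · have h1 := hppow q (n.factorization q) hq (Nat.ordProj_dvd n q)
      have h2 : (q : ℤ) ^ n.factorization q ∣ (D.natAbs : ℤ) := Int.dvd_natAbs.mpr h1
      have h3 : q ^ n.factorization q ∣ D.natAbs := by exact_mod_cast h2
      exact (hq.pow_dvd_iff_le_factorization hDnat).mp h3
    · simp [Nat.factorization_eq_zero_of_not_prime n hq]
  obtain ⟨c, hc⟩ := hdvd
  refine ⟨c, ?_⟩
  have hnq : (n : ℚ) ≠ 0 := Nat.cast_ne_zero.mpr hn.ne'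
  apply mul_left_cancel₀ hnq
  rw [hDF, hc]
  push_cast
  ring
end

section
/- Let G be a finite group, U, W ≤ G, and V ≤ U. Then φ_W(G/V) = Σ [N_G(Wᵢ) : N_U(Wᵢ)] · φ_{Wᵢ}(U/V), where the sum runs over a set of representatives Wᵢ of U-conjugacy classes of subgroups of U that are G-conjugate to W. -/
/-- `φ_A(G/B)`: the number of cosets `gB` with `A ⊆ gBg⁻¹`
(equivalently `g⁻¹Ag ⊆ B`). -/
noncomputable def fixedCosets {G : Type*} [Group G] (A B : Subgroup G) : ℕ :=
  Nat.card {x : G ⧸ B // ∃ g : G, (QuotientGroup.mk g : G ⧸ B) = x ∧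
    A.map (MulAut.conj g⁻¹).toMonoidHom ≤ B}

open scoped Pointwise

section Aux
variable {G : Type*} [Group G]

lemma map_conj_eq (A : Subgroup G) (g : G) :
    A.map (MulAut.conj g).toMonoidHom = MulAut.conj g • A := rfl

lemma conj_smul_eq_iff {m : G} {S : Subgroup G} :
    MulAut.conj m • S = S ↔ m ∈ Subgroup.normalizer (S : Set G) := by
  rw [Subgroup.mem_normalizer_iff]
  simp only [SetLike.ext_iff, Subgroup.mem_pointwise_smul_iff_inv_smul_mem]
  constructor
  · intro h g
    have := h (m * g * m⁻¹)
    simpa [MulAut.smul_def, mul_assoc] using this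
  · intro h x
    have := h (m⁻¹ * x * m)
    simpa [MulAut.smul_def, mul_assoc] using this

lemma conj_conj (a b : G) (T : Subgroup G) :
    MulAut.conj a • (MulAut.conj b • T) = MulAut.conj (a * b) • T := by
  rw [smul_smul, ← map_mul]

lemma preimage_mk_eq (V : Subgroup G) (p : G → Prop)
    (hp : ∀ g v, v ∈ V → p g → p (g * v)) :
    QuotientGroup.mk ⁻¹' {x : G ⧸ V | ∃ g, QuotientGroup.mk g = x ∧ p g} = {g | p g} := by
  ext g
  simp only [Set.mem_preimage, Set.mem_setOf_eq]
  constructor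
  · rintro ⟨g', h, hg'⟩
    have hv : g'⁻¹ * g ∈ V := (QuotientGroup.eq).mp h
    have := hp g' _ hv hg'
    simpa [mul_assoc] using this
  · exact fun h => ⟨g, rfl, h⟩

end Aux

lemma crux {G : Type*} [Group G] [Finite G] (U W V S : Subgroup G) (hVU : V ≤ U) (hSU : S ≤ U)
    (g₀ : G) (hg₀ : MulAut.conj g₀ • S = W) :
    Nat.card {x : G ⧸ V // ∃ g : G, (QuotientGroup.mk g : G ⧸ V) = x ∧
        MulAut.conj g⁻¹ • W ≤ V ∧ ∃ u ∈ U, MulAut.conj g⁻¹ • W = MulAut.conj u • S} =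
      U.relIndex (Subgroup.normalizer (S : Set G)) * fixedCosets (S.subgroupOf U) (V.subgroupOf U) := by
  classical
  have hg₀' : MulAut.conj g₀⁻¹ • W = S := by
    rw [← hg₀, conj_conj, inv_mul_cancel]; simp
  set N := Subgroup.normalizer (S : Set G) with hNdef
  set Qp : G → Prop := fun g => MulAut.conj g⁻¹ • W ≤ V ∧
      ∃ u ∈ U, MulAut.conj g⁻¹ • W = MulAut.conj u • S with hQp
  -- invariance of Qp under right multiplication by V
  have hinv : ∀ g v, v ∈ V → Qp g → Qp (g * v) := by
    intro g v hv ⟨h1, u, hu, h2⟩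
    have hconjgv : MulAut.conj (g * v)⁻¹ • W = MulAut.conj v⁻¹ • (MulAut.conj g⁻¹ • W) := by
      rw [conj_conj, mul_inv_rev]
    have hVfix : MulAut.conj v⁻¹ • V = V :=
      conj_smul_eq_iff.mpr (Subgroup.le_normalizer (V.inv_mem hv))
    constructor
    · rw [hconjgv, ← hVfix]
      exact Subgroup.pointwise_smul_le_pointwise_smul_iff.mpr h1
    · exact ⟨v⁻¹ * u, U.mul_mem (U.inv_mem (hVU hv)) hu, by
        rw [hconjgv, h2, conj_conj]⟩
  -- first count : |Ω| = |V| * |Fib|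
  have hcard1 : Nat.card {g : G | Qp g} =
      Nat.card V * Nat.card {x : G ⧸ V | ∃ g, QuotientGroup.mk g = x ∧ Qp g} := by
    rw [← preimage_mk_eq V Qp hinv,
      Nat.card_congr (QuotientGroup.preimageMkEquivSubgroupProdSet V _), Nat.card_prod]
  -- the U-side predicate
  set QU : U → Prop := fun u => MulAut.conj u⁻¹ • (S.subgroupOf U) ≤ V.subgroupOf U with hQUdef
  have hinvU : ∀ (u v : U), v ∈ V.subgroupOf U → QU u → QU (u * v) := by
    intro u v hv h1
    have hconj2 : MulAut.conj (u * v)⁻¹ • (S.subgroupOf U) =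
        MulAut.conj v⁻¹ • (MulAut.conj u⁻¹ • (S.subgroupOf U)) := by
      rw [conj_conj, mul_inv_rev]
    have hVfix : MulAut.conj v⁻¹ • (V.subgroupOf U) = V.subgroupOf U :=
      conj_smul_eq_iff.mpr (Subgroup.le_normalizer ((V.subgroupOf U).inv_mem hv))
    show MulAut.conj (u * v)⁻¹ • (S.subgroupOf U) ≤ V.subgroupOf U
    rw [hconj2, ← hVfix]
    exact Subgroup.pointwise_smul_le_pointwise_smul_iff.mpr h1
  have hcard2 : Nat.card {u : U | QU u} =
      Nat.card (V.subgroupOf U) *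
        Nat.card {y : U ⧸ V.subgroupOf U | ∃ u, QuotientGroup.mk u = y ∧ QU u} := by
    rw [← preimage_mk_eq (V.subgroupOf U) QU hinvU,
      Nat.card_congr (QuotientGroup.preimageMkEquivSubgroupProdSet _ _), Nat.card_prod]
  -- identify QU with the G-level condition
  have hQU_iff : ∀ u : U, QU u ↔ MulAut.conj (u : G)⁻¹ • S ≤ V := by
    intro u
    have h1 : MulAut.conj u⁻¹ • (S.subgroupOf U) =
        (MulAut.conj (u : G)⁻¹ • S).subgroupOf U := by
      have := Subgroup.conj_smul_subgroupOf hSU u⁻¹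
      simpa using this
    have hle : MulAut.conj (u : G)⁻¹ • S ≤ U := by
      have := Subgroup.conj_smul_le_of_le hSU u⁻¹
      simpa using this
    show MulAut.conj u⁻¹ • (S.subgroupOf U) ≤ V.subgroupOf U ↔ _
    rw [h1]
    constructor
    · intro h x hx
      exact Subgroup.mem_subgroupOf.mp
        (h (Subgroup.mem_subgroupOf.mpr (by exact hx) : (⟨x, hle hx⟩ : U) ∈ _))
    · intro h y hy
      exact Subgroup.mem_subgroupOf.mpr (h (Subgroup.mem_subgroupOf.mp hy))
  -- decomposition g = g₀ * m * u
  have key : ∀ g : {g : G // Qp g}, ∃ (m : N) (u : U),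
      MulAut.conj (u : G)⁻¹ • S ≤ V ∧ g₀ * m * u = (g : G) := by
    rintro ⟨g, h1, u, hu, h2⟩
    have hm : g₀⁻¹ * g * u ∈ N := by
      rw [hNdef, ← conj_smul_eq_iff, ← conj_conj, ← h2, conj_conj]
      simpa using hg₀'
    refine ⟨⟨g₀⁻¹ * g * u, hm⟩, ⟨u⁻¹, U.inv_mem hu⟩, ?_, ?_⟩
    · simpa [← h2] using h1
    · simp [mul_assoc]
  choose ms us hus hprod using key
  -- the product-with-condition type
  set Λ := {p : ↥N × ↥U // MulAut.conj ((p.2 : U) : G)⁻¹ • S ≤ V} with hΛ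
  -- the bijection
  have hbij : ∃ f : ↥(U.subgroupOf N) × {g : G // Qp g} → Λ, Function.Bijective f := by
    refine ⟨fun nz => ⟨(ms nz.2 * (nz.1 : N)⁻¹,
        (⟨((nz.1 : N) : G), Subgroup.mem_subgroupOf.mp nz.1.2⟩ : U) * us nz.2), ?_⟩, ?_, ?_⟩
    · -- condition
      obtain ⟨n, z⟩ := nz
      have hnN : ((n : N) : G) ∈ N := (n : N).2
      have : MulAut.conj (((⟨((n : N) : G), Subgroup.mem_subgroupOf.mp n.2⟩ : U) * us z : U) : G)⁻¹ • S
          = MulAut.conj ((us z : G))⁻¹ • (MulAut.conj ((n : N) : G)⁻¹ • S) := by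
        push_cast
        rw [conj_conj, mul_inv_rev]
      rw [this, conj_smul_eq_iff.mpr (N.inv_mem hnN : (((n : N) : G))⁻¹ ∈ N)]
      exact hus z
    · -- injective
      rintro ⟨n, z⟩ ⟨n', z'⟩ hEq
      have h1 : ms z * (n : N)⁻¹ = ms z' * (n' : N)⁻¹ := congrArg (fun p => p.1.1) hEq
      have h2 : (⟨((n : N) : G), Subgroup.mem_subgroupOf.mp n.2⟩ : U) * us z
          = (⟨((n' : N) : G), Subgroup.mem_subgroupOf.mp n'.2⟩ : U) * us z' :=
        congrArg (fun p => p.1.2) hEq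
      -- in G:
      have hg1 : (ms z : G) * ((n : N) : G)⁻¹ = (ms z' : G) * ((n' : N) : G)⁻¹ := by
        exact_mod_cast congrArg (fun x : N => (x : G)) h1
      have hg2 : ((n : N) : G) * (us z : G) = ((n' : N) : G) * (us z' : G) := by
        simpa using congrArg (fun x : U => (x : G)) h2
      have hzz : (z : G) = (z' : G) := by
        calc (z : G) = g₀ * (ms z : G) * (us z : G) := (hprod z).symm
          _ = (g₀ * ((ms z : G) * ((n : N) : G)⁻¹)) * (((n : N) : G) * (us z : G)) := by
              group
          _ = (g₀ * ((ms z' : G) * ((n' : N) : G)⁻¹)) * (((n' : N) : G) * (us z' : G)) := by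
              rw [hg1, hg2]
          _ = g₀ * (ms z' : G) * (us z' : G) := by group
          _ = (z' : G) := hprod z'
      have hz : z = z' := Subtype.ext hzz
      subst hz
      have hn : (n : N) = (n' : N) := by
        have := mul_left_cancel h1
        exact inv_injective this
      exact Prod.ext (Subtype.ext hn) rfl
    · -- surjective
      rintro ⟨⟨m, u⟩, hc⟩
      set g : G := g₀ * m * u with hgdef
      have hW : MulAut.conj g⁻¹ • W = MulAut.conj ((u : G))⁻¹ • S := by
        have e : MulAut.conj g⁻¹ • W =
            MulAut.conj ((u : G))⁻¹ • (MulAut.conj ((m : G))⁻¹ • (MulAut.conj g₀⁻¹ • W)) := by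
          rw [conj_conj, conj_conj]
          congr 1
          rw [hgdef]; group
        rw [e, hg₀', conj_smul_eq_iff.mpr (N.inv_mem m.2)]
      have hQpg : Qp g := ⟨by rw [hW]; exact hc, ⟨(u : G)⁻¹, U.inv_mem u.2, hW⟩⟩
      set z : {g : G // Qp g} := ⟨g, hQpg⟩ with hzdef
      have hmu : (ms z : G) * (us z : G) = (m : G) * (u : G) := by
        have h : g₀ * (ms z : G) * (us z : G) = g₀ * (m : G) * (u : G) := hprod z
        have h1 : g₀ * ((ms z : G) * (us z : G)) = g₀ * ((m : G) * (u : G)) := by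
          rw [← mul_assoc, ← mul_assoc]; exact h
        exact mul_left_cancel h1
      have hnG : ((m : G))⁻¹ * (ms z : G) = (u : G) * ((us z : G))⁻¹ := by
        rw [← mul_left_inj ((us z : G))]
        calc ((m : G))⁻¹ * (ms z : G) * (us z : G)
            = ((m : G))⁻¹ * ((ms z : G) * (us z : G)) := by group
          _ = ((m : G))⁻¹ * ((m : G) * (u : G)) := by rw [hmu]
          _ = (u : G) := by group
          _ = (u : G) * ((us z : G))⁻¹ * (us z : G) := by group
      have hnU : ((m⁻¹ * ms z : N) : G) ∈ U := by
        push_cast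
        rw [hnG]
        exact U.mul_mem u.2 (U.inv_mem (us z).2)
      refine ⟨(⟨m⁻¹ * ms z, Subgroup.mem_subgroupOf.mpr hnU⟩, z), ?_⟩
      apply Subtype.ext
      apply Prod.ext
      · show ms z * (m⁻¹ * ms z)⁻¹ = m
        group
      · apply Subtype.ext
        show ((m⁻¹ * ms z : N) : G) * (us z : G) = (u : G)
        push_cast
        rw [hnG]
        group
  -- reorganize the counting
  obtain ⟨f, hf⟩ := hbij
  have c4 : Nat.card (↥(U.subgroupOf N) × {g : G // Qp g}) = Nat.card Λ :=
    Nat.card_eq_of_bijective f hf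
  have cL : Nat.card Λ =
      Nat.card N * Nat.card {u : U // MulAut.conj ((u : G))⁻¹ • S ≤ V} := by
    rw [← Nat.card_prod]
    exact Nat.card_congr ⟨fun p => (p.1.1, ⟨p.1.2, p.2⟩), fun q => ⟨(q.1, q.2.1), q.2.2⟩,
      fun _ => rfl, fun _ => rfl⟩
  have cPhiU : Nat.card {u : U // MulAut.conj ((u : G))⁻¹ • S ≤ V} = Nat.card {u : U | QU u} :=
    Nat.card_congr (Equiv.subtypeEquivRight (fun u => (hQU_iff u).symm))
  have cV' : Nat.card (V.subgroupOf U) = Nat.card V :=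
    Nat.card_congr (Subgroup.subgroupOfEquivOfLe hVU).toEquiv
  have cN : (U.subgroupOf N).index * Nat.card (U.subgroupOf N) = Nat.card N :=
    Subgroup.index_mul_card (U.subgroupOf N)
  set a := Nat.card {x : G ⧸ V | ∃ g, QuotientGroup.mk g = x ∧ Qp g} with ha
  set b := Nat.card {y : U ⧸ V.subgroupOf U | ∃ u, QuotientGroup.mk u = y ∧ QU u} with hb
  set k := Nat.card (U.subgroupOf N) with hk
  set v := Nat.card V with hv
  set r := (U.subgroupOf N).index with hr
  have hOm : Nat.card {g : G // Qp g} = v * a := hcard1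
  have e1 : Nat.card Λ = k * (v * a) := by
    rw [← c4, Nat.card_prod, hOm]
  have e2 : Nat.card Λ = Nat.card N * (v * b) := by
    rw [cL, cPhiU, hcard2, cV']
  have h' : (k * v) * a = (k * v) * (r * b) := by
    calc (k * v) * a = k * (v * a) := by ring
      _ = Nat.card N * (v * b) := by rw [← e1, e2]
      _ = (r * k) * (v * b) := by rw [cN]
      _ = (k * v) * (r * b) := by ring
  have hkpos : 0 < k := Nat.card_pos
  have hvpos : 0 < v := Nat.card_pos
  have main : a = r * b := Nat.eq_of_mul_eq_mul_left (Nat.mul_pos hkpos hvpos) h'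
  exact main


/-- For a finite group `G`, subgroups `U, W ≤ G` and `V ≤ U`,
`φ_W(G/V) = Σᵢ [N_G(Wᵢ):N_U(Wᵢ)]·φ_{Wᵢ}(U/V)`, the sum being over a set of
representatives `Wᵢ` of the `U`-conjugacy classes of subgroups of `U` that
are `G`-conjugate to `W`. -/
theorem fixedCosets_eq_sum_over_reps
    {G : Type*} [Group G] [Finite G] (U W V : Subgroup G) (hVU : V ≤ U)
    (reps : Finset (Subgroup G))
    (hle : ∀ S ∈ reps, S ≤ U)
    (hconj : ∀ S ∈ reps, ∃ g : G, S = W.map (MulAut.conj g).toMonoidHom)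
    (hdist : ∀ S ∈ reps, ∀ T ∈ reps,
      (∃ u ∈ U, T = S.map (MulAut.conj u).toMonoidHom) → S = T)
    (hcover : ∀ S : Subgroup G, S ≤ U →
      (∃ g : G, S = W.map (MulAut.conj g).toMonoidHom) →
      ∃ T ∈ reps, ∃ u ∈ U, S = T.map (MulAut.conj u).toMonoidHom) :
    fixedCosets W V =
      ∑ S ∈ reps,
        U.relIndex (Subgroup.normalizer (S : Set G)) *
          fixedCosets (S.subgroupOf U) (V.subgroupOf U) := by
  classical
  letI : Fintype (G ⧸ V) := Fintype.ofFinite _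
  set P : G ⧸ V → Prop := fun x => ∃ g : G, (QuotientGroup.mk g : G ⧸ V) = x ∧
      MulAut.conj g⁻¹ • W ≤ V with hP
  set Q : Subgroup G → (G ⧸ V) → Prop := fun S x => ∃ g : G,
      (QuotientGroup.mk g : G ⧸ V) = x ∧ MulAut.conj g⁻¹ • W ≤ V ∧
      ∃ u ∈ U, MulAut.conj g⁻¹ • W = MulAut.conj u • S with hQ
  have hQP : ∀ S x, Q S x → P x := by
    rintro S x ⟨g, h1, h2, _⟩; exact ⟨g, h1, h2⟩
  have huniq : ∀ x S T, S ∈ reps → T ∈ reps → Q S x → Q T x → S = T := by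
    rintro x S T hS hT ⟨g, hgx, hgle, u, hu, hgu⟩ ⟨g', hgx', hgle', u', hu', hgu'⟩
    have hv : g⁻¹ * g' ∈ V := (QuotientGroup.eq).mp (hgx.trans hgx'.symm)
    have e : MulAut.conj g'⁻¹ • W = MulAut.conj (g⁻¹ * g')⁻¹ • (MulAut.conj g⁻¹ • W) := by
      rw [conj_conj]; congr 2; group
    apply hdist S hS T hT
    refine ⟨u'⁻¹ * ((g⁻¹ * g')⁻¹ * u), ?_, ?_⟩
    · exact U.mul_mem (U.inv_mem hu') (U.mul_mem (U.inv_mem (hVU hv)) hu)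
    · have h3 : MulAut.conj u' • T = MulAut.conj ((g⁻¹ * g')⁻¹ * u) • S := by
        rw [← hgu', e, hgu, conj_conj]
      rw [map_conj_eq]
      calc T = MulAut.conj u'⁻¹ • (MulAut.conj u' • T) := by rw [conj_conj]; simp
        _ = MulAut.conj u'⁻¹ • (MulAut.conj ((g⁻¹ * g')⁻¹ * u) • S) := by rw [h3]
        _ = MulAut.conj (u'⁻¹ * ((g⁻¹ * g')⁻¹ * u)) • S := conj_conj _ _ _
  have hex : ∀ x, P x → ∃ S, S ∈ reps ∧ Q S x := by
    rintro x ⟨g, hgx, hgle⟩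
    obtain ⟨T, hT, u, hu, hTu⟩ := hcover (MulAut.conj g⁻¹ • W) (le_trans hgle hVU)
      ⟨g⁻¹, (map_conj_eq W g⁻¹).symm⟩
    exact ⟨T, hT, g, hgx, hgle, u, hu, by rw [hTu, map_conj_eq]⟩
  set f : G ⧸ V → Subgroup G :=
    fun x => if h : ∃ S, S ∈ reps ∧ Q S x then h.choose else ⊥ with hfdef
  have hfspec : ∀ x, P x → f x ∈ reps ∧ Q (f x) x := by
    intro x hx
    have h : ∃ S, S ∈ reps ∧ Q S x := hex x hx
    have hfx : f x = h.choose := by simp only [hfdef]; rw [dif_pos h]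
    rw [hfx]; exact h.choose_spec
  have hcards : fixedCosets W V = (Finset.univ.filter P).card := by
    rw [show fixedCosets W V = Nat.card {x : G ⧸ V // P x} from rfl,
      Nat.card_eq_fintype_card, Fintype.card_subtype]
  have hsum : (Finset.univ.filter P).card =
      ∑ S ∈ reps, ((Finset.univ.filter P).filter (fun x => f x = S)).card :=
    Finset.card_eq_sum_card_fiberwise (fun x hx =>
      (hfspec x (Finset.mem_filter.mp hx).2).1)
  have hfib : ∀ S ∈ reps,
      ((Finset.univ.filter P).filter (fun x => f x = S)) = Finset.univ.filter (Q S) := by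
    intro S hS
    ext x
    simp only [Finset.mem_filter, Finset.mem_univ, true_and]
    constructor
    · rintro ⟨hPx, hfx⟩
      have := (hfspec x hPx).2
      rwa [hfx] at this
    · intro hQx
      have hPx := hQP S x hQx
      exact ⟨hPx, huniq x (f x) S (hfspec x hPx).1 hS (hfspec x hPx).2 hQx⟩
  rw [hcards, hsum]
  apply Finset.sum_congr rfl
  intro S hS
  rw [hfib S hS]
  obtain ⟨gS, hgS⟩ := hconj S hS
  have hg₀ : MulAut.conj gS⁻¹ • S = W := by
    rw [hgS, map_conj_eq, conj_conj]; simp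
  calc (Finset.univ.filter (Q S)).card = Nat.card {x : G ⧸ V // Q S x} := by
        rw [Nat.card_eq_fintype_card, Fintype.card_subtype]
    _ = U.relIndex (Subgroup.normalizer (S : Set G)) * fixedCosets (S.subgroupOf U) (V.subgroupOf U) :=
        crux U W V S hVU (hle S hS) gS⁻¹ hg₀
end

section
/- Let q, r be nonzero integers and consider the system of equations Σ_{d|n} d·q^{(n/d)−1}·X_d^{n/d} = Σ_{d|n} d·r^{(n/d)−1}·Y_d^{n/d} for all n ≥ 1, solved for Y in terms of X over ℚ. Then for each n, Y_n − X_n is a polynomial in the X_d (d ∣ n, d < n) with coefficients in ℤ[1/q, 1/r] ∩ ℤ[1/p : p prime]. -/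
open MvPolynomial Finset

namespace StrictIsoAux
variable {p : ℕ} [hp : Fact p.Prime]



lemma fermat_padic (c : ℤ_[p]) : (p : ℤ_[p]) ∣ c ^ p - c := by
  have h1 : PadicInt.toZMod (c ^ p - c) = 0 := by
    rw [map_sub, map_pow, ZMod.pow_card, sub_self]
  have h2 : c ^ p - c ∈ RingHom.ker (PadicInt.toZMod (p := p)) := h1
  rwa [PadicInt.ker_toZMod, PadicInt.maximalIdeal_eq_span_p, Ideal.mem_span_singleton] at h2

lemma frob (f : MvPolynomial ℕ ℤ_[p]) :
    (p : MvPolynomial ℕ ℤ_[p]) ∣ f ^ p - MvPolynomial.expand p f := by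
  have h0 : MvPolynomial.map (PadicInt.toZMod (p := p)) (f ^ p - MvPolynomial.expand p f) = 0 := by
    rw [map_sub, map_pow, MvPolynomial.map_expand, ← MvPolynomial.expand_zmod, sub_self]
  rw [show ((p : MvPolynomial ℕ ℤ_[p])) = C (p : ℤ_[p]) by simp, C_dvd_iff_dvd_coeff]
  intro i
  have h1 := congrArg (fun g => MvPolynomial.coeff i g) h0
  simp only [MvPolynomial.coeff_map, MvPolynomial.coeff_zero] at h1
  have h2 : MvPolynomial.coeff i (f ^ p - MvPolynomial.expand p f) ∈
      RingHom.ker (PadicInt.toZMod (p := p)) := h1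
  rwa [PadicInt.ker_toZMod, PadicInt.maximalIdeal_eq_span_p, Ideal.mem_span_singleton] at h2

lemma base_cong (c : ℤ_[p]) (f : MvPolynomial ℕ ℤ_[p]) (u : ℕ) :
    (p : MvPolynomial ℕ ℤ_[p]) ∣
      (C c) ^ (p * u) * f ^ (p * u) - (C c) ^ u * (MvPolynomial.expand p f) ^ u := by
  have hc : (p : MvPolynomial ℕ ℤ_[p]) ∣ (C c) ^ (p * u) - (C c) ^ u := by
    have : (C c : MvPolynomial ℕ ℤ_[p]) ^ p - C c ∣ ((C c) ^ p) ^ u - (C c) ^ u :=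
      sub_dvd_pow_sub_pow _ _ u
    rw [← pow_mul] at this
    refine dvd_trans (dvd_trans ?_ this) ?_
    · rw [show ((C c : MvPolynomial ℕ ℤ_[p]) ^ p - C c) = C (c ^ p - c) by
        rw [map_sub, map_pow]]
      rw [show ((p : MvPolynomial ℕ ℤ_[p])) = C (p : ℤ_[p]) by simp]
      exact map_dvd (C : ℤ_[p] →+* MvPolynomial ℕ ℤ_[p]) (fermat_padic c)
    · exact dvd_refl _
  have hf : (p : MvPolynomial ℕ ℤ_[p]) ∣ f ^ (p * u) - (MvPolynomial.expand p f) ^ u := by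
    have : f ^ p - MvPolynomial.expand p f ∣ (f ^ p) ^ u - (MvPolynomial.expand p f) ^ u :=
      sub_dvd_pow_sub_pow _ _ u
    rw [← pow_mul] at this
    exact dvd_trans (frob f) this
  have key : (C c : MvPolynomial ℕ ℤ_[p]) ^ (p * u) * f ^ (p * u)
      - (C c) ^ u * (MvPolynomial.expand p f) ^ u
      = (C c) ^ (p * u) * (f ^ (p * u) - (MvPolynomial.expand p f) ^ u)
        + ((C c) ^ (p * u) - (C c) ^ u) * (MvPolynomial.expand p f) ^ u := by ring
  rw [key]
  exact dvd_add (Dvd.dvd.mul_left hf _) (Dvd.dvd.mul_right hc _)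

lemma lifted_cong (c : ℤ_[p]) (f : MvPolynomial ℕ ℤ_[p]) (u s : ℕ) :
    (p : MvPolynomial ℕ ℤ_[p]) ^ (s + 1) ∣
      (C c) ^ (p ^ (s + 1) * u) * f ^ (p ^ (s + 1) * u)
        - (C c) ^ (p ^ s * u) * (MvPolynomial.expand p f) ^ (p ^ s * u) := by
  have h := dvd_sub_pow_of_dvd_sub (base_cong c f u) s
  have e1 : ((C c : MvPolynomial ℕ ℤ_[p]) ^ (p * u) * f ^ (p * u)) ^ (p ^ s)
      = (C c) ^ (p ^ (s+1) * u) * f ^ (p ^ (s+1) * u) := by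
    rw [mul_pow, ← pow_mul, ← pow_mul]; ring_nf
  have e2 : ((C c : MvPolynomial ℕ ℤ_[p]) ^ u * (MvPolynomial.expand p f) ^ u) ^ (p ^ s)
      = (C c) ^ (p ^ s * u) * (MvPolynomial.expand p f) ^ (p ^ s * u) := by
    rw [mul_pow, ← pow_mul, ← pow_mul]; ring_nf
  rw [e1, e2] at h
  exact h

lemma term_cong (c : ℤ_[p]) (hc : IsUnit c) (f : MvPolynomial ℕ ℤ_[p]) (s u : ℕ) (hu : 0 < u) :
    (p : MvPolynomial ℕ ℤ_[p]) ^ (s + 1) ∣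
      (C c) ^ (p ^ (s + 1) * u - 1) * f ^ (p ^ (s + 1) * u)
        - (C c) ^ (p ^ s * u - 1) * (MvPolynomial.expand p f) ^ (p ^ s * u) := by
  have hCc : IsUnit (C c : MvPolynomial ℕ ℤ_[p]) := hc.map C
  rw [← hCc.dvd_mul_left]
  have h1 : 0 < p ^ (s+1) * u := Nat.mul_pos (Nat.pow_pos hp.out.pos) hu
  have h2 : 0 < p ^ s * u := Nat.mul_pos (Nat.pow_pos hp.out.pos) hu
  have e : (C c : MvPolynomial ℕ ℤ_[p]) *
      ((C c) ^ (p ^ (s + 1) * u - 1) * f ^ (p ^ (s + 1) * u)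
        - (C c) ^ (p ^ s * u - 1) * (MvPolynomial.expand p f) ^ (p ^ s * u))
      = (C c) ^ (p ^ (s + 1) * u) * f ^ (p ^ (s + 1) * u)
        - (C c) ^ (p ^ s * u) * (MvPolynomial.expand p f) ^ (p ^ s * u) := by
    rw [mul_sub, ← mul_assoc, ← mul_assoc, ← pow_succ', ← pow_succ',
      Nat.sub_add_cancel h1, Nat.sub_add_cancel h2]
  rw [e]
  exact lifted_cong c f u s




lemma exists_lift (f : MvPolynomial ℕ ℚ_[p]) (h : ∀ m, ‖f.coeff m‖ ≤ 1) :
    ∃ w : MvPolynomial ℕ ℤ_[p], MvPolynomial.map PadicInt.Coe.ringHom w = f := by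
  classical
  refine ⟨∑ m ∈ f.support, monomial m (⟨f.coeff m, h m⟩ : ℤ_[p]), ?_⟩
  rw [map_sum]
  have : ∀ m ∈ f.support,
      MvPolynomial.map (PadicInt.Coe.ringHom (p := p)) (monomial m (⟨f.coeff m, h m⟩ : ℤ_[p]))
        = monomial m (f.coeff m) := by
    intro m _
    exact MvPolynomial.map_monomial _ _ _
  rw [Finset.sum_congr rfl this]
  exact support_sum_monomial_coeff f

lemma dvd_iff_norm_le {x : ℤ_[p]} {a : ℕ} :
    (p : ℤ_[p]) ^ a ∣ x ↔ ‖(x : ℚ_[p])‖ ≤ (p : ℝ) ^ (-(a : ℤ)) := by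
  rw [← PadicInt.norm_def, PadicInt.norm_le_pow_iff_mem_span_pow, Ideal.mem_span_singleton]

lemma norm_natCast_le {n : ℕ} (a : ℕ) (hpa : (p : ℕ) ^ a ∣ n) :
    ‖(n : ℚ_[p])‖ ≤ (p : ℝ) ^ (-(a : ℤ)) := by
  obtain ⟨t, rfl⟩ := hpa
  push_cast
  rw [norm_mul]
  calc ‖(p : ℚ_[p]) ^ a‖ * ‖(t : ℚ_[p])‖ ≤ ‖(p : ℚ_[p]) ^ a‖ * 1 := by
        refine mul_le_mul_of_nonneg_left ?_ (norm_nonneg _)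
        exact_mod_cast Padic.norm_int_le_one (t : ℤ)
    _ = (p : ℝ) ^ (-(a : ℤ)) := by
        rw [mul_one, norm_pow, Padic.norm_p, zpow_neg, zpow_natCast, inv_pow]
        



lemma isUnit_int {q : ℤ} (hq : ¬ (p:ℤ) ∣ q) : IsUnit ((q : ℤ_[p])) := by
  refine PadicInt.isUnit_iff.mpr (le_antisymm (PadicInt.norm_le_one _) ?_)
  by_contra h
  exact hq ((PadicInt.norm_int_lt_one_iff_dvd q).mp (lt_of_not_ge h))


lemma main_term (c : ℤ_[p]) (hc : IsUnit c) (f : MvPolynomial ℕ ℤ_[p]) (k : ℕ) (hk : 0 < k) :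
    (p : MvPolynomial ℕ ℤ_[p]) ^ (k.factorization p + 1) ∣
      (C c) ^ (p * k - 1) * f ^ (p * k)
        - (C c) ^ (k - 1) * (MvPolynomial.expand p f) ^ k := by
  have hk2 : p ^ (k.factorization p) * (k / p ^ (k.factorization p)) = k :=
    Nat.ordProj_mul_ordCompl_eq_self k p
  have hu : 0 < k / p ^ (k.factorization p) := Nat.ordCompl_pos p hk.ne'
  have h := term_cong c hc f (k.factorization p) (k / p ^ (k.factorization p)) hu
  rwa [show p ^ (k.factorization p + 1) * (k / p ^ (k.factorization p)) = p * k by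
      rw [pow_succ', mul_assoc, hk2], hk2] at h

lemma nat_dvd_ordProj {n d : ℕ} (hn : 0 < n) (hd : d ∣ n) (hpn : p ∣ n)
    (hndm : ¬ d ∣ n / p) : p ^ n.factorization p ∣ d := by
  have hd0 : 0 < d := Nat.pos_of_dvd_of_pos hd hn
  have hm0 : 0 < n / p := Nat.div_pos (Nat.le_of_dvd hn hpn) hp.out.pos
  have hnm : n = (n / p) * p := (Nat.div_mul_cancel hpn).symm
  by_contra hcon
  apply hndm
  rw [← Nat.factorization_le_iff_dvd hd0.ne' hm0.ne']
  have hle := (Nat.factorization_le_iff_dvd hd0.ne' hn.ne').mpr hd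
  have hfac : n.factorization = (n/p).factorization + Finsupp.single p 1 := by
    conv_lhs => rw [hnm]
    rw [Nat.factorization_mul hm0.ne' hp.out.pos.ne', hp.out.factorization]
  have hdfp : d.factorization p < n.factorization p := by
    by_contra h2
    exact hcon ((pow_dvd_pow p (le_of_not_gt h2)).trans (Nat.ordProj_dvd d p))
  rw [Finsupp.le_def]
  intro ℓ
  have h3 := Finsupp.le_def.mp hle ℓ
  rw [hfac] at h3
  by_cases hlp : ℓ = p
  · rw [hlp]
    have h4 : n.factorization p = (n/p).factorization p + 1 := by
      rw [hfac]; simp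
    omega
  · simpa [Finsupp.single_apply, Ne.symm hlp] using h3

lemma fact_eq {d k : ℕ} (hd : 0 < d) (hk : 0 < k) :
    (d * k * p).factorization p = d.factorization p + (k.factorization p + 1) := by
  rw [Nat.factorization_mul (by positivity) hp.out.pos.ne',
    Nat.factorization_mul hd.ne' hk.ne', hp.out.factorization]
  simp [Finsupp.single_eq_same]
  omega

noncomputable def tB (q r : ℤ) (W : ℕ → MvPolynomial ℕ ℤ_[p]) (n d : ℕ) :
    MvPolynomial ℕ ℤ_[p] :=
  (d : MvPolynomial ℕ ℤ_[p]) * (q : MvPolynomial ℕ ℤ_[p]) ^ (n / d - 1) * (X d) ^ (n / d)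
    - (d : MvPolynomial ℕ ℤ_[p]) * (r : MvPolynomial ℕ ℤ_[p]) ^ (n / d - 1) * (W d) ^ (n / d)

lemma sum_dvd (q r : ℤ) (hq : ¬(p:ℤ) ∣ q) (hr : ¬(p:ℤ) ∣ r)
    (W : ℕ → MvPolynomial ℕ ℤ_[p]) (n : ℕ) (hn : 0 < n)
    (hEm : p ∣ n → ∑ e ∈ (n / p).divisors, tB q r W (n / p) e = 0) :
    (p : MvPolynomial ℕ ℤ_[p]) ^ (n.factorization p) ∣
      ∑ d ∈ n.divisors.erase n, tB q r W n d := by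
  by_cases hpn : p ∣ n
  case neg =>
    rw [Nat.factorization_eq_zero_of_not_dvd hpn, pow_zero]
    exact one_dvd _
  case pos =>
  have hm0 : 0 < n / p := Nat.div_pos (Nat.le_of_dvd hn hpn) hp.out.pos
  have hmn : n / p < n := Nat.div_lt_self hn hp.out.one_lt
  have hnm : n / p * p = n := Nat.div_mul_cancel hpn
  have hmdvd : n / p ∣ n := Nat.div_dvd_of_dvd hpn
  rw [← Finset.sum_filter_add_sum_filter_not (n.divisors.erase n) (fun d => d ∣ n / p)]
  refine dvd_add ?_ ?_
  · -- terms with d ∣ n/p : compare with expand of the (n/p)-relation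
    have hfil : (n.divisors.erase n).filter (fun d => d ∣ n / p) = (n / p).divisors := by
      ext e
      simp only [Finset.mem_filter, Finset.mem_erase, Nat.mem_divisors]
      constructor
      · rintro ⟨⟨-, hen, -⟩, hem⟩
        exact ⟨hem, hm0.ne'⟩
      · rintro ⟨hem, -⟩
        have hlt : e < n := lt_of_le_of_lt (Nat.le_of_dvd hm0 hem) hmn
        exact ⟨⟨hlt.ne, hem.trans hmdvd, hn.ne'⟩, hem⟩
    rw [hfil]
    have hexp : ∑ e ∈ (n / p).divisors, MvPolynomial.expand p (tB q r W (n / p) e) = 0 := by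
      rw [← map_sum, hEm hpn, map_zero]
    have hrw : ∑ d ∈ (n / p).divisors, tB q r W n d
        = ∑ d ∈ (n / p).divisors,
            (tB q r W n d - MvPolynomial.expand p (tB q r W (n / p) d)) := by
      rw [Finset.sum_sub_distrib, hexp, sub_zero]
    rw [hrw]
    refine Finset.dvd_sum ?_
    intro d hd
    rw [Nat.mem_divisors] at hd
    obtain ⟨k, hk⟩ := hd.1
    have hd0 : 0 < d := Nat.pos_of_dvd_of_pos hd.1 hm0
    have hk0 : 0 < k := by
      rcases Nat.eq_zero_or_pos k with h | h
      · exfalso; rw [h, mul_zero] at hk; exact hm0.ne' hk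
      · exact h
    have hmd : n / p / d = k := by rw [hk, Nat.mul_div_cancel_left _ hd0]
    have hnd : n / d = p * k := by
      have h1 : n = d * (p * k) := by rw [← hnm, hk]; ring
      rw [h1, Nat.mul_div_cancel_left _ hd0]
    have haeq : n.factorization p = d.factorization p + (k.factorization p + 1) := by
      have h1 : n = d * k * p := by rw [← hnm, hk]
      rw [h1]; exact fact_eq hd0 hk0
    have hexp2 : MvPolynomial.expand p (tB q r W (n / p) d)
        = (d : MvPolynomial ℕ ℤ_[p]) * (q : MvPolynomial ℕ ℤ_[p]) ^ (k - 1)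
              * (MvPolynomial.expand p (X d)) ^ k
          - (d : MvPolynomial ℕ ℤ_[p]) * (r : MvPolynomial ℕ ℤ_[p]) ^ (k - 1)
              * (MvPolynomial.expand p (W d)) ^ k := by
      simp only [tB, hmd, map_sub, map_mul, map_pow, map_natCast, map_intCast]
    have hdq : (p : MvPolynomial ℕ ℤ_[p]) ^ (d.factorization p)
        ∣ (d : MvPolynomial ℕ ℤ_[p]) := by
      have h2 := Nat.cast_dvd_cast (α := MvPolynomial ℕ ℤ_[p]) (Nat.ordProj_dvd d p)
      push_cast at h2
      exact h2
    have hQ : ((q : ℤ) : MvPolynomial ℕ ℤ_[p]) = C ((q : ℤ_[p])) := (map_intCast (C : ℤ_[p] →+* MvPolynomial ℕ ℤ_[p]) q).symm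
    have hR : ((r : ℤ) : MvPolynomial ℕ ℤ_[p]) = C ((r : ℤ_[p])) := (map_intCast (C : ℤ_[p] →+* MvPolynomial ℕ ℤ_[p]) r).symm
    have t1 := main_term ((q : ℤ_[p])) (isUnit_int hq) (X d) k hk0
    have t2 := main_term ((r : ℤ_[p])) (isUnit_int hr) (W d) k hk0
    rw [hexp2, haeq]
    simp only [tB, hnd, hQ, hR]
    have hre : (d : MvPolynomial ℕ ℤ_[p]) * C ((q:ℤ_[p])) ^ (p * k - 1) * (X d) ^ (p * k)
          - (d : MvPolynomial ℕ ℤ_[p]) * C ((r:ℤ_[p])) ^ (p * k - 1) * (W d) ^ (p * k)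
          - ((d : MvPolynomial ℕ ℤ_[p]) * C ((q:ℤ_[p])) ^ (k - 1)
              * (MvPolynomial.expand p (X d)) ^ k
            - (d : MvPolynomial ℕ ℤ_[p]) * C ((r:ℤ_[p])) ^ (k - 1)
              * (MvPolynomial.expand p (W d)) ^ k)
        = (d : MvPolynomial ℕ ℤ_[p]) *
            (C ((q:ℤ_[p])) ^ (p * k - 1) * (X d) ^ (p * k)
              - C ((q:ℤ_[p])) ^ (k - 1) * (MvPolynomial.expand p (X d)) ^ k)
          - (d : MvPolynomial ℕ ℤ_[p]) *
            (C ((r:ℤ_[p])) ^ (p * k - 1) * (W d) ^ (p * k)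
              - C ((r:ℤ_[p])) ^ (k - 1) * (MvPolynomial.expand p (W d)) ^ k) := by ring
    rw [hre, pow_add]
    exact dvd_sub (mul_dvd_mul hdq t1) (mul_dvd_mul hdq t2)
  · -- terms with ¬ d ∣ n/p : the coefficient d is divisible by p^a
    refine Finset.dvd_sum ?_
    intro d hdm
    simp only [Finset.mem_filter, Finset.mem_erase, Nat.mem_divisors] at hdm
    obtain ⟨⟨hdn1, hdn, -⟩, hndvd⟩ := hdm
    have hpd : p ^ n.factorization p ∣ d := nat_dvd_ordProj hn hdn hpn hndvd
    have hdc : (p : MvPolynomial ℕ ℤ_[p]) ^ n.factorization p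
        ∣ (d : MvPolynomial ℕ ℤ_[p]) := by
      have h2 := Nat.cast_dvd_cast (α := MvPolynomial ℕ ℤ_[p]) hpd
      push_cast at h2
      exact h2
    exact dvd_sub (Dvd.dvd.mul_right (Dvd.dvd.mul_right hdc _) _)
      (Dvd.dvd.mul_right (Dvd.dvd.mul_right hdc _) _)

noncomputable def tK (q r : ℤ) (Z : ℕ → MvPolynomial ℕ ℚ_[p]) (n d : ℕ) :
    MvPolynomial ℕ ℚ_[p] :=
  (d : MvPolynomial ℕ ℚ_[p]) * (q : MvPolynomial ℕ ℚ_[p]) ^ (n / d - 1) * (X d) ^ (n / d)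
    - (d : MvPolynomial ℕ ℚ_[p]) * (r : MvPolynomial ℕ ℚ_[p]) ^ (n / d - 1) * (Z d) ^ (n / d)

lemma map_tB (q r : ℤ) (W : ℕ → MvPolynomial ℕ ℤ_[p]) (Z : ℕ → MvPolynomial ℕ ℚ_[p]) (n d : ℕ)
    (h : MvPolynomial.map PadicInt.Coe.ringHom (W d) = Z d) :
    MvPolynomial.map PadicInt.Coe.ringHom (tB q r W n d) = tK q r Z n d := by
  simp only [tB, tK, map_sub, map_mul, map_pow, map_natCast, map_intCast,
    MvPolynomial.map_X, h]

lemma norm_nat_eq {n : ℕ} (hn : 0 < n) :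
    ‖(n : ℚ_[p])‖ = (p : ℝ) ^ (-(n.factorization p : ℤ)) := by
  have key : (n : ℚ_[p]) = (p : ℚ_[p]) ^ (n.factorization p) * ((ordCompl[p] n : ℕ) : ℚ_[p]) := by
    rw [← Nat.cast_pow, ← Nat.cast_mul, Nat.ordProj_mul_ordCompl_eq_self]
  rw [key, norm_mul]
  have h2 : ‖((ordCompl[p] n : ℕ) : ℚ_[p])‖ = 1 := by
    apply le_antisymm
    · exact_mod_cast Padic.norm_int_le_one (p := p) ((ordCompl[p] n : ℕ) : ℤ)
    · by_contra h
      have h4 := (Padic.norm_intCast_lt_one_iff (k := ((ordCompl[p] n : ℕ) : ℤ))).mp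
        (by exact_mod_cast lt_of_not_ge h)
      rw [Int.natCast_dvd_natCast] at h4
      exact Nat.not_dvd_ordCompl hp.out hn.ne' h4
  rw [h2, mul_one, norm_pow, Padic.norm_p, zpow_neg, zpow_natCast, inv_pow]

set_option maxHeartbeats 2000000 in
theorem padic_integral (q r : ℤ) (hq : ¬(p:ℤ) ∣ q) (hr : ¬(p:ℤ) ∣ r)
    (Y : ℕ → MvPolynomial ℕ ℚ)
    (hY : ∀ n : ℕ, 0 < n →
      ∑ d ∈ n.divisors, (d : MvPolynomial ℕ ℚ) * (q : MvPolynomial ℕ ℚ) ^ (n / d - 1) *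
          (MvPolynomial.X d) ^ (n / d)
        = ∑ d ∈ n.divisors, (d : MvPolynomial ℕ ℚ) * (r : MvPolynomial ℕ ℚ) ^ (n / d - 1) *
            (Y d) ^ (n / d)) :
    ∀ n : ℕ, 0 < n → ∃ w : MvPolynomial ℕ ℤ_[p],
      MvPolynomial.map PadicInt.Coe.ringHom w
        = MvPolynomial.map (Rat.castHom ℚ_[p]) (Y n) := by
  classical
  set Z : ℕ → MvPolynomial ℕ ℚ_[p] :=
    fun d => MvPolynomial.map (Rat.castHom ℚ_[p]) (Y d) with hZ
  have hZdef : ∀ d, MvPolynomial.map (Rat.castHom ℚ_[p]) (Y d) = Z d := fun _ => rfl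
  set W : ℕ → MvPolynomial ℕ ℤ_[p] := fun d =>
    if h : ∃ w, MvPolynomial.map PadicInt.Coe.ringHom w = Z d then h.choose else 0 with hW
  have hWspec : ∀ d, (∃ w, MvPolynomial.map PadicInt.Coe.ringHom w = Z d) →
      MvPolynomial.map PadicInt.Coe.ringHom (W d) = Z d := by
    intro d h
    rw [hW]
    simp only
    rw [dif_pos h]
    exact h.choose_spec
  have hK : ∀ n, 0 < n → ∑ d ∈ n.divisors, tK q r Z n d = 0 := by
    intro n hn
    have h0 := congrArg (MvPolynomial.map (Rat.castHom ℚ_[p])) (hY n hn)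
    rw [map_sum, map_sum] at h0
    simp only [map_mul, map_pow, map_natCast, map_intCast, MvPolynomial.map_X, hZdef] at h0
    simp only [tK]
    rw [Finset.sum_sub_distrib, sub_eq_zero]
    exact h0
  intro n
  induction n using Nat.strong_induction_on with
  | _ n IH =>
  intro hn
  show ∃ w, MvPolynomial.map PadicInt.Coe.ringHom w = Z n
  apply exists_lift
  intro mi
  -- equation at level n
  have hself : n ∈ n.divisors := Nat.mem_divisors_self n hn.ne'
  have h1 := hK n hn
  rw [← Finset.sum_erase_add _ _ hself] at h1
  have hnn : n / n = 1 := Nat.div_self hn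
  rw [show tK q r Z n n = (n : MvPolynomial ℕ ℚ_[p]) * X n - (n : MvPolynomial ℕ ℚ_[p]) * Z n by
    simp only [tK, hnn]
    simp] at h1
  -- h1 : S + (n * X n - n * Z n) = 0
  have hWd : ∀ d ∈ n.divisors.erase n, MvPolynomial.map PadicInt.Coe.ringHom (W d) = Z d := by
    intro d hd
    rw [Finset.mem_erase, Nat.mem_divisors] at hd
    have hdpos : 0 < d := Nat.pos_of_dvd_of_pos hd.2.1 hn
    exact hWspec d (IH d (lt_of_le_of_ne (Nat.le_of_dvd hn hd.2.1) hd.1) hdpos)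
  have hSB : MvPolynomial.map PadicInt.Coe.ringHom (∑ d ∈ n.divisors.erase n, tB q r W n d)
      = ∑ d ∈ n.divisors.erase n, tK q r Z n d := by
    rw [map_sum]
    exact Finset.sum_congr rfl (fun d hd => map_tB q r W Z n d (hWd d hd))
  have h2 : (n : MvPolynomial ℕ ℚ_[p]) * Z n - (n : MvPolynomial ℕ ℚ_[p]) * X n
      = MvPolynomial.map PadicInt.Coe.ringHom (∑ d ∈ n.divisors.erase n, tB q r W n d) := by
    rw [hSB]
    linear_combination -h1
  -- divisibility
  have hEm : p ∣ n → ∑ e ∈ (n / p).divisors, tB q r W (n / p) e = 0 := by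
    intro hpn
    have hm0 : 0 < n / p := Nat.div_pos (Nat.le_of_dvd hn hpn) hp.out.pos
    have hmn : n / p < n := Nat.div_lt_self hn hp.out.one_lt
    apply MvPolynomial.map_injective (PadicInt.Coe.ringHom) Subtype.coe_injective
    rw [map_sum, map_zero]
    have : ∀ e ∈ (n / p).divisors, MvPolynomial.map PadicInt.Coe.ringHom (tB q r W (n / p) e)
        = tK q r Z (n / p) e := by
      intro e he
      rw [Nat.mem_divisors] at he
      have hepos : 0 < e := Nat.pos_of_dvd_of_pos he.1 hm0
      have helt : e < n := lt_of_le_of_lt (Nat.le_of_dvd hm0 he.1) hmn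
      exact map_tB q r W Z (n / p) e (hWspec e (IH e helt hepos))
    rw [Finset.sum_congr rfl this]
    exact hK (n / p) hm0
  have hdvd := sum_dvd q r hq hr W n hn hEm
  -- coefficient bound
  set a := n.factorization p with ha
  have hcdvd : (p : ℤ_[p]) ^ a ∣ (∑ d ∈ n.divisors.erase n, tB q r W n d).coeff mi := by
    have hcast : ((p : MvPolynomial ℕ ℤ_[p])) ^ a = C ((p : ℤ_[p]) ^ a) := by
      rw [C_pow, MvPolynomial.C_eq_coe_nat]
    rw [hcast, C_dvd_iff_dvd_coeff] at hdvd
    exact hdvd mi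
  have h5 : ‖((((∑ d ∈ n.divisors.erase n, tB q r W n d).coeff mi) : ℤ_[p]) : ℚ_[p])‖
      ≤ (p : ℝ) ^ (-(a : ℤ)) := dvd_iff_norm_le.mp hcdvd
  -- take coefficients in h2
  have h4 := congrArg (MvPolynomial.coeff mi) h2
  rw [MvPolynomial.coeff_sub, MvPolynomial.coeff_map] at h4
  have hCn : ((n : ℕ) : MvPolynomial ℕ ℚ_[p]) = C ((n : ℕ) : ℚ_[p]) :=
    (MvPolynomial.C_eq_coe_nat n).symm
  rw [hCn, MvPolynomial.coeff_C_mul, MvPolynomial.coeff_C_mul] at h4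
  rw [← mul_sub] at h4
  -- norms
  have hnne : ((n : ℕ) : ℚ_[p]) ≠ 0 := Nat.cast_ne_zero.mpr hn.ne'
  have h6 : ‖((n : ℕ) : ℚ_[p])‖ = (p : ℝ) ^ (-(a : ℤ)) := norm_nat_eq hn
  have h7 : ‖(Z n).coeff mi - (X n : MvPolynomial ℕ ℚ_[p]).coeff mi‖ ≤ 1 := by
    have h8 := congrArg norm h4
    rw [norm_mul] at h8
    have hpos : (0:ℝ) < ‖((n : ℕ) : ℚ_[p])‖ := norm_pos_iff.mpr hnne
    rw [← h6] at h5
    have h9 : ‖((n : ℕ) : ℚ_[p])‖ * ‖(Z n).coeff mi - (X n : MvPolynomial ℕ ℚ_[p]).coeff mi‖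
        ≤ ‖((n : ℕ) : ℚ_[p])‖ * 1 := by
      rw [mul_one, h8]
      exact h5
    exact le_of_mul_le_mul_left h9 hpos
  have h8 : ‖(X n : MvPolynomial ℕ ℚ_[p]).coeff mi‖ ≤ 1 := by
    rw [MvPolynomial.coeff_X']
    split <;> simp
  calc ‖(Z n).coeff mi‖
      = ‖((Z n).coeff mi - (X n : MvPolynomial ℕ ℚ_[p]).coeff mi)
          + (X n : MvPolynomial ℕ ℚ_[p]).coeff mi‖ := by rw [sub_add_cancel]
    _ ≤ max ‖(Z n).coeff mi - (X n : MvPolynomial ℕ ℚ_[p]).coeff mi‖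
          ‖(X n : MvPolynomial ℕ ℚ_[p]).coeff mi‖ := Padic.nonarchimedean _ _
    _ ≤ 1 := max_le h7 h8


end StrictIsoAux

namespace StrictIsoAux


theorem supp_lemma (q r : ℤ) (Y : ℕ → MvPolynomial ℕ ℚ)
    (hY : ∀ n : ℕ, 0 < n →
      ∑ d ∈ n.divisors, (d : MvPolynomial ℕ ℚ) * (q : MvPolynomial ℕ ℚ) ^ (n / d - 1) *
          (MvPolynomial.X d) ^ (n / d)
        = ∑ d ∈ n.divisors, (d : MvPolynomial ℕ ℚ) * (r : MvPolynomial ℕ ℚ) ^ (n / d - 1) *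
            (Y d) ^ (n / d)) :
    ∀ n : ℕ, 0 < n →
      (Y n - MvPolynomial.X n) ∈ MvPolynomial.supported ℚ {d : ℕ | d ∣ n ∧ d ≠ n}
        ∧ Y n ∈ MvPolynomial.supported ℚ {e : ℕ | e ∣ n} := by
  intro n
  induction n using Nat.strong_induction_on with
  | _ n IH =>
  intro hn
  have hself : n ∈ n.divisors := Nat.mem_divisors_self n hn.ne'
  have h1 := hY n hn
  rw [← Finset.sum_erase_add _ _ hself, ← Finset.sum_erase_add _ _ hself] at h1
  have hnn : n / n = 1 := Nat.div_self hn
  rw [hnn] at h1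
  simp only [Nat.sub_self, pow_zero, mul_one, pow_one] at h1
  -- h1 : S_X + n * X n = S_Y + n * Y n
  have hn0 : ((n : ℚ)) ≠ 0 := Nat.cast_ne_zero.mpr hn.ne'
  have hCn : ((n : ℕ) : MvPolynomial ℕ ℚ) = C ((n : ℕ) : ℚ) := (MvPolynomial.C_eq_coe_nat n).symm
  have key : Y n - MvPolynomial.X n
      = C ((n : ℚ)⁻¹) *
          ∑ d ∈ n.divisors.erase n,
            ((d : MvPolynomial ℕ ℚ) * (q : MvPolynomial ℕ ℚ) ^ (n / d - 1) *
                (MvPolynomial.X d) ^ (n / d)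
              - (d : MvPolynomial ℕ ℚ) * (r : MvPolynomial ℕ ℚ) ^ (n / d - 1) *
                (Y d) ^ (n / d)) := by
    have h2 : C ((n:ℕ) : ℚ) * (Y n - MvPolynomial.X n)
        = ∑ d ∈ n.divisors.erase n,
            ((d : MvPolynomial ℕ ℚ) * (q : MvPolynomial ℕ ℚ) ^ (n / d - 1) *
                (MvPolynomial.X d) ^ (n / d)
              - (d : MvPolynomial ℕ ℚ) * (r : MvPolynomial ℕ ℚ) ^ (n / d - 1) *
                (Y d) ^ (n / d)) := by
      rw [← hCn, Finset.sum_sub_distrib]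
      linear_combination -h1
    calc Y n - MvPolynomial.X n
        = C ((n : ℚ)⁻¹) * (C ((n:ℕ) : ℚ) * (Y n - MvPolynomial.X n)) := by
          rw [← mul_assoc, ← C_mul, inv_mul_cancel₀ hn0, C_1, one_mul]
      _ = _ := by rw [h2]
  have hpart1 : Y n - MvPolynomial.X n ∈
      MvPolynomial.supported ℚ {d : ℕ | d ∣ n ∧ d ≠ n} := by
    rw [key]
    refine Subalgebra.mul_mem _ ?_ ?_
    · have : C ((n : ℚ)⁻¹) = algebraMap ℚ (MvPolynomial ℕ ℚ) ((n : ℚ)⁻¹) := rfl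
      rw [this]
      exact Subalgebra.algebraMap_mem _ _
    · refine Subalgebra.sum_mem _ ?_
      intro d hd
      rw [Finset.mem_erase, Nat.mem_divisors] at hd
      have hdn : d ∣ n := hd.2.1
      have hdne : d ≠ n := hd.1
      have hd0 : 0 < d := Nat.pos_of_dvd_of_pos hdn hn
      have hdlt : d < n := lt_of_le_of_ne (Nat.le_of_dvd hn hdn) hdne
      refine Subalgebra.sub_mem _ ?_ ?_
      · refine Subalgebra.mul_mem _ (Subalgebra.mul_mem _ ?_ ?_) ?_
        · exact Subalgebra.natCast_mem _ _
        · exact Subalgebra.pow_mem _ (Subalgebra.intCast_mem _ _) _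
        · refine Subalgebra.pow_mem _ ?_ _
          rw [MvPolynomial.X_mem_supported]
          exact ⟨hdn, hdne⟩
      · refine Subalgebra.mul_mem _ (Subalgebra.mul_mem _ ?_ ?_) ?_
        · exact Subalgebra.natCast_mem _ _
        · exact Subalgebra.pow_mem _ (Subalgebra.intCast_mem _ _) _
        · refine Subalgebra.pow_mem _ ?_ _
          have hYd := (IH d hdlt hd0).2
          refine MvPolynomial.supported_mono ?_ hYd
          intro e he
          have hed : e ∣ d := he
          refine ⟨hed.trans hdn, fun hcon => ?_⟩
          exact absurd (Nat.le_of_dvd hd0 (hcon ▸ hed)) (not_le.mpr hdlt)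
  refine ⟨hpart1, ?_⟩
  have h3 : Y n = (Y n - MvPolynomial.X n) + MvPolynomial.X n := by ring
  rw [h3]
  refine Subalgebra.add_mem _ ?_ ?_
  · refine MvPolynomial.supported_mono ?_ hpart1
    intro e he
    exact he.1
  · rw [MvPolynomial.X_mem_supported]
    exact dvd_refl n


end StrictIsoAux


/-- Let `q, r` be nonzero integers and let `Y` solve the system
`Σ_{d|n} d·q^{(n/d)-1}·X_d^{n/d} = Σ_{d|n} d·r^{(n/d)-1}·Y_d^{n/d}` over `ℚ`.
Then for each `n`, `Y_n − X_n` is a polynomial in the variables `X_d` with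
`d ∣ n`, `d ≠ n`, all of whose coefficients lie in `ℤ[1/q, 1/r]`. -/
theorem strict_iso_coefficients (q r : ℤ) (hq : q ≠ 0) (hr : r ≠ 0)
    (Y : ℕ → MvPolynomial ℕ ℚ)
    (hY : ∀ n : ℕ, 0 < n →
      ∑ d ∈ n.divisors, (d : MvPolynomial ℕ ℚ) * (q : MvPolynomial ℕ ℚ) ^ (n / d - 1) *
          (MvPolynomial.X d) ^ (n / d)
        = ∑ d ∈ n.divisors, (d : MvPolynomial ℕ ℚ) * (r : MvPolynomial ℕ ℚ) ^ (n / d - 1) *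
            (Y d) ^ (n / d)) :
    ∀ n : ℕ, 0 < n →
      (Y n - MvPolynomial.X n) ∈ MvPolynomial.supported ℚ {d : ℕ | d ∣ n ∧ d ≠ n} ∧
      ∀ m : ℕ →₀ ℕ, ∃ (k : ℤ) (i j : ℕ),
        (Y n - MvPolynomial.X n).coeff m * (q : ℚ) ^ i * (r : ℚ) ^ j = (k : ℚ) := by
  intro n hn
  refine ⟨(StrictIsoAux.supp_lemma q r Y hY n hn).1, ?_⟩
  intro m
  set x : ℚ := (Y n - MvPolynomial.X n).coeff m with hx
  have hnorm : ∀ (p : ℕ) (_ : Fact p.Prime), ¬(p:ℤ) ∣ q → ¬(p:ℤ) ∣ r → ‖(x : ℚ_[p])‖ ≤ 1 := by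
    intro p pp hpq hpr
    haveI := pp
    obtain ⟨w, hw⟩ := StrictIsoAux.padic_integral q r hpq hpr Y hY n hn
    have hcoeffY : (((Y n).coeff m : ℚ) : ℚ_[p]) = ((w.coeff m : ℤ_[p]) : ℚ_[p]) := by
      have h0 := congrArg (MvPolynomial.coeff m) hw
      rw [MvPolynomial.coeff_map, MvPolynomial.coeff_map] at h0
      exact h0.symm
    have h1 : ‖(((Y n).coeff m : ℚ) : ℚ_[p])‖ ≤ 1 := by
      rw [hcoeffY, PadicInt.padic_norm_e_of_padicInt]
      exact PadicInt.norm_le_one _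
    have h2 : ‖((MvPolynomial.coeff m (MvPolynomial.X n : MvPolynomial ℕ ℚ) : ℚ) : ℚ_[p])‖
        ≤ 1 := by
      rw [MvPolynomial.coeff_X']
      split <;> simp
    have hxeq : (x : ℚ_[p]) = (((Y n).coeff m : ℚ) : ℚ_[p])
        - ((MvPolynomial.coeff m (MvPolynomial.X n : MvPolynomial ℕ ℚ) : ℚ) : ℚ_[p]) := by
      rw [hx, MvPolynomial.coeff_sub]
      push_cast
      ring
    rw [hxeq, sub_eq_add_neg]
    refine le_trans (Padic.nonarchimedean _ _) (max_le h1 ?_)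
    rw [norm_neg]
    exact h2
  have hden : ∀ p, p.Prime → p ∣ x.den → p ∣ (q * r).natAbs := by
    intro p pp hpd
    by_contra hnd
    haveI : Fact p.Prime := ⟨pp⟩
    have hndz : ¬ (p:ℤ) ∣ q * r := fun h => hnd (Int.natCast_dvd.mp h)
    have hpq : ¬(p:ℤ) ∣ q := fun h => hndz (Dvd.dvd.mul_right h r)
    have hpr : ¬(p:ℤ) ∣ r := fun h => hndz (Dvd.dvd.mul_left h q)
    have h3 := hnorm p ⟨pp⟩ hpq hpr
    have hdenne : ((x.den : ℕ) : ℚ_[p]) ≠ 0 := Nat.cast_ne_zero.mpr x.den_pos.ne'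
    have hnum : ((x.num : ℤ) : ℚ_[p]) = (x:ℚ_[p]) * ((x.den:ℕ):ℚ_[p]) := by
      rw [Rat.cast_def]
      field_simp
    have h4 : ‖((x.num : ℤ) : ℚ_[p])‖ < 1 := by
      rw [hnum, norm_mul]
      have h5 : ‖((x.den:ℕ):ℚ_[p])‖ < 1 := by
        have h6 := (Padic.norm_intCast_lt_one_iff (k := ((x.den:ℕ):ℤ))).mpr
          (Int.natCast_dvd_natCast.mpr hpd)
        push_cast at h6
        exact h6
      calc ‖(x:ℚ_[p])‖ * ‖((x.den:ℕ):ℚ_[p])‖ ≤ 1 * ‖((x.den:ℕ):ℚ_[p])‖ :=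
            mul_le_mul_of_nonneg_right h3 (norm_nonneg _)
        _ = ‖((x.den:ℕ):ℚ_[p])‖ := one_mul _
        _ < 1 := h5
    have h6 : (p:ℤ) ∣ x.num := Padic.norm_intCast_lt_one_iff.mp h4
    have h7 : p ∣ x.num.natAbs := Int.natCast_dvd.mp h6
    have h8 : p ∣ Nat.gcd x.num.natAbs x.den := Nat.dvd_gcd h7 hpd
    rw [x.reduced] at h8
    exact pp.one_lt.ne' (Nat.dvd_one.mp h8)
  have hden0 : x.den ≠ 0 := x.den_pos.ne'
  have hqr0 : (q*r).natAbs ≠ 0 := Int.natAbs_ne_zero.mpr (mul_ne_zero hq hr)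
  have hdvd : x.den ∣ (q*r).natAbs ^ x.den := by
    rw [← Nat.factorization_le_iff_dvd hden0 (pow_ne_zero _ hqr0), Nat.factorization_pow,
      Finsupp.le_def]
    intro ℓ
    rw [Finsupp.smul_apply]
    by_cases hℓ : ℓ.Prime ∧ ℓ ∣ x.den
    · have h9 := hden ℓ hℓ.1 hℓ.2
      have h10 : 1 ≤ (q*r).natAbs.factorization ℓ :=
        hℓ.1.factorization_pos_of_dvd hqr0 h9
      have h11 : x.den.factorization ℓ < x.den := Nat.factorization_lt ℓ hden0
      have h12 := Nat.mul_le_mul_left x.den h10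
      simp only [smul_eq_mul]
      omega
    · have h13 : x.den.factorization ℓ = 0 := by
        rcases not_and_or.mp hℓ with h | h
        · exact Nat.factorization_eq_zero_of_not_prime _ h
        · exact Nat.factorization_eq_zero_of_not_dvd h
      simp [h13]
  obtain ⟨t, ht⟩ : ((x.den : ℕ) : ℤ) ∣ (q*r)^(x.den) := by
    have h14 : ((x.den:ℕ):ℤ) ∣ ((((q*r)^x.den).natAbs : ℕ) : ℤ) := by
      rw [Int.natAbs_pow]
      exact Int.natCast_dvd_natCast.mpr hdvd
    exact Int.dvd_natAbs.mp h14
  refine ⟨x.num * t, x.den, x.den, ?_⟩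
  have h15 : x * (q:ℚ)^x.den * (r:ℚ)^x.den = x * (((q*r)^x.den : ℤ) : ℚ) := by
    push_cast
    ring
  rw [h15, ht]
  push_cast
  rw [← mul_assoc]
  have hd : (x.den : ℚ) ≠ 0 := Nat.cast_ne_zero.mpr hden0
  have h16 : x * (x.den : ℚ) = (x.num : ℚ) :=
    ((div_eq_iff hd).mp (Rat.num_div_den x)).symm
  rw [h16]
end

section
/- Let G be a finite group, U ≤ G and V ≤ U, and let W ≤ G be G-conjugate to V. Then the number of double cosets WgU ⊆ G such that g^{-1}Wg ⊆ U (equivalently W ⊆ gUg^{-1}) and g^{-1}Wg is U-conjugate to V equals [N_G(V):N_U(V)]. -/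
open Subgroup

private lemma map_conj_eq_iff {G : Type*} [Group G] (V : Subgroup G) (a : G) :
    V.map (MulAut.conj a).toMonoidHom = V ↔ a ∈ Subgroup.normalizer (V : Set G) := by
  rw [Subgroup.mem_normalizer_iff]
  constructor
  · intro h x
    constructor
    · intro hx
      have : a * x * a⁻¹ ∈ V.map (MulAut.conj a).toMonoidHom :=
        ⟨x, hx, by simp [MulAut.conj]⟩
      rwa [h] at this
    · intro hx
      have : a * x * a⁻¹ ∈ V.map (MulAut.conj a).toMonoidHom := by rwa [h]
      obtain ⟨y, hy, hyx⟩ := this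
      simp only [MulEquiv.coe_toMonoidHom, MulAut.conj_apply] at hyx
      have : y = x := by
        have := hyx
        group at this ⊢
        exact mul_left_cancel (mul_right_cancel this)
      rwa [← this]
  · intro h
    ext x
    simp only [Subgroup.mem_map, MulEquiv.coe_toMonoidHom, MulAut.conj_apply]
    constructor
    · rintro ⟨y, hy, rfl⟩
      exact (h y).mp hy
    · intro hx
      exact ⟨a⁻¹ * x * a,
        by have := (h (a⁻¹ * x * a)).mpr (by group; simpa using hx); exact this, by group⟩

private lemma map_conj_comp {G : Type*} [Group G] (V : Subgroup G) (a b : G) :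
    (V.map (MulAut.conj b).toMonoidHom).map (MulAut.conj a).toMonoidHom
      = V.map (MulAut.conj (a * b)).toMonoidHom := by
  rw [Subgroup.map_map]
  congr 1
  ext x
  simp [mul_assoc]

/-- (Core of `Ind_U^G(e_{[V]}) = [N_G(V):N_U(V)]·e_{[V]}`.)
Let `G` be a finite group, `U ≤ G`, `V ≤ U`, and let `W ≤ G` be `G`-conjugate
to `V`.  Then the number of cosets `gU ⊆ G` with `g⁻¹Wg ⊆ U` (i.e.
`W ⊆ gUg⁻¹`) and `g⁻¹Wg` `U`-conjugate to `V` equals `[N_G(V) : N_U(V)]`. -/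
theorem induction_e_basis_count
    {G : Type*} [Group G] [Finite G] (U V W : Subgroup G)
    (hVU : V ≤ U) (hW : ∃ t : G, W = V.map (MulAut.conj t).toMonoidHom) :
    Nat.card {x : G ⧸ U // ∃ g : G, (QuotientGroup.mk g : G ⧸ U) = x ∧
        W.map (MulAut.conj g⁻¹).toMonoidHom ≤ U ∧
        ∃ u ∈ U, W.map (MulAut.conj g⁻¹).toMonoidHom
          = V.map (MulAut.conj u).toMonoidHom} =
      U.relIndex (Subgroup.normalizer (V : Set G)) := by
  obtain ⟨t, rfl⟩ := hW
  set N := Subgroup.normalizer (V : Set G) with hN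
  have key : ∀ x : G ⧸ U,
      (∃ g : G, (QuotientGroup.mk g : G ⧸ U) = x ∧
        ((V.map (MulAut.conj t).toMonoidHom).map (MulAut.conj g⁻¹).toMonoidHom ≤ U) ∧
        ∃ u ∈ U, (V.map (MulAut.conj t).toMonoidHom).map (MulAut.conj g⁻¹).toMonoidHom
          = V.map (MulAut.conj u).toMonoidHom)
      ↔ ∃ n : N, (QuotientGroup.mk (t * (n : G)) : G ⧸ U) = x := by
    intro x
    constructor
    · rintro ⟨g, rfl, _, u, hu, hconj⟩
      rw [map_conj_comp] at hconj
      have h2 : (V.map (MulAut.conj (g⁻¹ * t)).toMonoidHom).map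
          (MulAut.conj u⁻¹).toMonoidHom = V := by
        rw [hconj, map_conj_comp, inv_mul_cancel]
        ext y; simp
      rw [map_conj_comp] at h2
      have hn : u⁻¹ * (g⁻¹ * t) ∈ N := (map_conj_eq_iff V _).mp h2
      refine ⟨⟨(u⁻¹ * (g⁻¹ * t))⁻¹, N.inv_mem hn⟩, ?_⟩
      show (QuotientGroup.mk (t * (u⁻¹ * (g⁻¹ * t))⁻¹) : G ⧸ U) = QuotientGroup.mk g
      apply QuotientGroup.eq.mpr
      have h4 : (t * (u⁻¹ * (g⁻¹ * t))⁻¹)⁻¹ * g = u⁻¹ := by group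
      rw [h4]
      exact U.inv_mem hu
    · rintro ⟨⟨n, hn⟩, rfl⟩
      refine ⟨t * n, rfl, ?_, 1, U.one_mem, ?_⟩
      · rw [map_conj_comp]
        have h4 : (t * n)⁻¹ * t = n⁻¹ := by group
        rw [h4, map_conj_eq_iff V n⁻¹ |>.mpr (N.inv_mem hn)]
        exact hVU
      · rw [map_conj_comp]
        have h4 : (t * n)⁻¹ * t = n⁻¹ := by group
        rw [h4, map_conj_eq_iff V n⁻¹ |>.mpr (N.inv_mem hn)]
        ext y; simp
  have main : Nat.card {x : G ⧸ U // ∃ g : G, (QuotientGroup.mk g : G ⧸ U) = x ∧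
        ((V.map (MulAut.conj t).toMonoidHom).map (MulAut.conj g⁻¹).toMonoidHom ≤ U) ∧
        ∃ u ∈ U, (V.map (MulAut.conj t).toMonoidHom).map (MulAut.conj g⁻¹).toMonoidHom
          = V.map (MulAut.conj u).toMonoidHom}
      = Nat.card (N ⧸ U.subgroupOf N) := by
    symm
    have wd : ∀ a b : N,
        @Setoid.r _ (QuotientGroup.leftRel (U.subgroupOf N)) a b →
        (⟨QuotientGroup.mk (t * (a : G)), (key _).mpr ⟨a, rfl⟩⟩ :
          {x : G ⧸ U // ∃ g : G, (QuotientGroup.mk g : G ⧸ U) = x ∧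
          ((V.map (MulAut.conj t).toMonoidHom).map (MulAut.conj g⁻¹).toMonoidHom ≤ U) ∧
          ∃ u ∈ U, (V.map (MulAut.conj t).toMonoidHom).map (MulAut.conj g⁻¹).toMonoidHom
            = V.map (MulAut.conj u).toMonoidHom})
        = ⟨QuotientGroup.mk (t * (b : G)), (key _).mpr ⟨b, rfl⟩⟩ := by
      intro a b hab
      have hab' : (a : G)⁻¹ * b ∈ U := by
        have := (QuotientGroup.leftRel_apply).mp hab
        rw [Subgroup.mem_subgroupOf] at this
        simpa using this
      ext : 1
      apply QuotientGroup.eq.mpr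
      have h3 : (t * (a : G))⁻¹ * (t * (b : G)) = (a : G)⁻¹ * b := by group
      rw [h3]; exact hab'
    apply Nat.card_eq_of_bijective (fun q => Quotient.liftOn' q _ wd)
    constructor
    · intro a b hab
      induction a using Quotient.inductionOn'
      induction b using Quotient.inductionOn'
      rename_i a b
      apply Quotient.sound'
      rw [QuotientGroup.leftRel_apply, Subgroup.mem_subgroupOf]
      have h := congrArg Subtype.val hab
      simp only [Quotient.liftOn'_mk''] at h
      have h2 : (t * (a : G))⁻¹ * (t * (b : G)) ∈ U := QuotientGroup.eq.mp h
      have h3 : (t * (a : G))⁻¹ * (t * (b : G)) = (a : G)⁻¹ * b := by group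
      rw [h3] at h2
      simpa using h2
    · rintro ⟨x, hx⟩
      obtain ⟨n, hn⟩ := (key x).mp hx
      exact ⟨Quotient.mk'' n, Subtype.ext hn⟩
  rw [main, Subgroup.relIndex, Subgroup.index]
end
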